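/- arXiv:math/0507051 — 2 statements merged into one kernel-verified Lean document; each statement's English description precedes it below -/
import Mathlib

section
/- Let f6 = x^2(x-1)^2(x^2+2x) - x^2(x-1)^2(y^2-1) + (1/3)(x^2-1)(y^2-1)^2 - (1/27)(y^2-1)^3 as a polynomial in ℚ[x,y]. Let f2 = -(1/3)y^2 + x^2 - 2/3, g2 = -(x-1)y and h2 = 2x+1. Then f6 = f2^3 + g2^2 * h2 in ℚ[x,y]. -/
open MvPolynomial

noncomputable section

/-- The variable `x` in `ℚ[x,y]`. -/
def x : MvPolynomial (Fin 2) ℚ := X 0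
/-- The variable `y` in `ℚ[x,y]`. -/
def y : MvPolynomial (Fin 2) ℚ := X 1
/-- Constant polynomial. -/
def c (q : ℚ) : MvPolynomial (Fin 2) ℚ := C q

/-- Oka's six-cuspidal sextic. -/
def f6 : MvPolynomial (Fin 2) ℚ :=
  x ^ 2 * (x - 1) ^ 2 * (x ^ 2 + 2 * x) - x ^ 2 * (x - 1) ^ 2 * (y ^ 2 - 1)
    + c (1/3) * (x ^ 2 - 1) * (y ^ 2 - 1) ^ 2 - c (1/27) * (y ^ 2 - 1) ^ 3

def f2 : MvPolynomial (Fin 2) ℚ := - c (1/3) * y ^ 2 + x ^ 2 - c (2/3)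

def g2 : MvPolynomial (Fin 2) ℚ := -((x - 1) * y)

def h2 : MvPolynomial (Fin 2) ℚ := 2 * x + 1

/-- The semi-torus decomposition `f6 = f2^3 + g2^2 h2`. -/
theorem semi_torus_decomposition : f6 = f2 ^ 3 + g2 ^ 2 * h2 := by
  apply MvPolynomial.funext
  intro p
  simp only [f6, f2, g2, h2, x, y, c, map_add, map_sub, map_mul, map_pow, map_neg,
    map_ofNat, eval_C, eval_X, map_one]
  ring

end
end

section
/- Let t2, t3, t4, t5 ∈ ℂ with t2 ≠ 0. Suppose h ∈ ℂ[x,y] is a nonzero polynomial of total degree at most 2 such that h(1,0) = 0 and such that the one-variable polynomial h(t2*y^2 + t3*y^3 + t4*y^4 + t5*y^5, y) ∈ ℂ[y] obtained by substituting x = t2*y^2 + t3*y^3 + t4*y^4 + t5*y^5 has vanishing coefficients in all degrees 0, 1, 2, 3, 4 and 5 (i.e., is divisible by y^6). Then t3*t4 + 2*t2^2*t3 - t5*t2 = 0. -/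
open MvPolynomial Polynomial

lemma fin2_finsupp_eq (m n : Fin 2 →₀ ℕ) : m = n ↔ m 0 = n 0 ∧ m 1 = n 1 := by
  constructor
  · rintro rfl; exact ⟨rfl, rfl⟩
  · rintro ⟨h0, h1⟩; ext i; fin_cases i <;> assumption

lemma conic_decomp (h : MvPolynomial (Fin 2) ℂ) (hdeg : h.totalDegree ≤ 2) :
    h = MvPolynomial.monomial 0 (MvPolynomial.coeff 0 h)
      + MvPolynomial.monomial (Finsupp.single 0 1) (MvPolynomial.coeff (Finsupp.single 0 1) h)
      + MvPolynomial.monomial (Finsupp.single 1 1) (MvPolynomial.coeff (Finsupp.single 1 1) h)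
      + MvPolynomial.monomial (Finsupp.single 0 2) (MvPolynomial.coeff (Finsupp.single 0 2) h)
      + MvPolynomial.monomial (Finsupp.single 0 1 + Finsupp.single 1 1)
          (MvPolynomial.coeff (Finsupp.single 0 1 + Finsupp.single 1 1) h)
      + MvPolynomial.monomial (Finsupp.single 1 2) (MvPolynomial.coeff (Finsupp.single 1 2) h) := by
  apply MvPolynomial.ext
  intro m
  simp only [MvPolynomial.coeff_add, MvPolynomial.coeff_monomial, fin2_finsupp_eq,
    Finsupp.add_apply, Finsupp.single_apply, Finsupp.coe_zero, Pi.zero_apply]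
  norm_num
  by_cases hij : m 0 + m 1 ≤ 2
  · have h0 : m 0 ≤ 2 := le_trans (Nat.le_add_right _ _) hij
    have h1 : m 1 ≤ 2 := le_trans (Nat.le_add_left _ _) hij
    interval_cases H0 : (m 0) <;> interval_cases H1 : (m 1) <;> simp_all <;>
      (congr 1; rw [fin2_finsupp_eq]; simp [Finsupp.single_apply, H0, H1])
  · have hz : MvPolynomial.coeff m h = 0 := by
      apply coeff_eq_zero_of_totalDegree_lt
      refine lt_of_le_of_lt hdeg ?_
      have hs : (Finset.sum m.support fun i => m i) = m 0 + m 1 := by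
        rw [Finset.sum_subset (Finset.subset_univ _)
          (by intro i _ hi; simpa using Finsupp.notMem_support_iff.mp hi)]
        exact Fin.sum_univ_two m
      omega
    rw [hz]
    split_ifs <;> simp_all <;> omega

lemma monomial_form_eq (a b c d e f : ℂ) :
    ((MvPolynomial.monomial 0) a + (MvPolynomial.monomial (Finsupp.single 0 1)) b +
        (MvPolynomial.monomial (Finsupp.single 1 1)) c +
        (MvPolynomial.monomial (Finsupp.single 0 2)) d +
        (MvPolynomial.monomial ((Finsupp.single 0 1) + (Finsupp.single 1 1))) e +
        (MvPolynomial.monomial (Finsupp.single 1 2)) f : MvPolynomial (Fin 2) ℂ)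
    = MvPolynomial.C a + MvPolynomial.C b * MvPolynomial.X 0 + MvPolynomial.C c * MvPolynomial.X 1
      + MvPolynomial.C d * MvPolynomial.X 0 ^ 2
      + MvPolynomial.C e * (MvPolynomial.X 0 * MvPolynomial.X 1)
      + MvPolynomial.C f * MvPolynomial.X 1 ^ 2 := by
  have h1 : ∀ (i : Fin 2) (n : ℕ) (x : ℂ), MvPolynomial.C x * MvPolynomial.X i ^ n
      = MvPolynomial.monomial (Finsupp.single i n) x := fun i n x =>
    MvPolynomial.C_mul_X_pow_eq_monomial
  have h2 : (MvPolynomial.monomial ((Finsupp.single 0 1) + (Finsupp.single 1 1)) e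
        : MvPolynomial (Fin 2) ℂ)
      = MvPolynomial.monomial (Finsupp.single 0 1) e * MvPolynomial.monomial (Finsupp.single 1 1) 1 := by
    rw [MvPolynomial.monomial_mul, mul_one]
  rw [h2, ← h1 0 1 b, ← h1 1 1 c, ← h1 0 2 d, ← h1 1 2 f, ← h1 0 1 e, ← h1 1 1 1,
    MvPolynomial.C_1, ← MvPolynomial.C_apply]
  ring

/-- If a nonzero conic `h` vanishes at `(1,0)` and the substitution
`x ↦ t2 y² + t3 y³ + t4 y⁴ + t5 y⁵` kills all coefficients of degree `≤ 5`,
then the obstruction `J = t3 t4 + 2 t2² t3 - t5 t2` vanishes. -/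
theorem maximal_contact_obstruction
    (t2 t3 t4 t5 : ℂ) (ht2 : t2 ≠ 0)
    (h : MvPolynomial (Fin 2) ℂ) (hne : h ≠ 0) (hdeg : h.totalDegree ≤ 2)
    (hval : MvPolynomial.eval ![1, 0] h = 0)
    (hcoeff : ∀ j ≤ 5,
      ((MvPolynomial.aeval
        ![Polynomial.C t2 * Polynomial.X ^ 2 + Polynomial.C t3 * Polynomial.X ^ 3 +
            Polynomial.C t4 * Polynomial.X ^ 4 + Polynomial.C t5 * Polynomial.X ^ 5,
          Polynomial.X] h : Polynomial ℂ)).coeff j = 0) :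
    t3 * t4 + 2 * t2 ^ 2 * t3 - t5 * t2 = 0 := by
  set a := MvPolynomial.coeff 0 h with ha
  set b := MvPolynomial.coeff (Finsupp.single 0 1) h with hb
  set c := MvPolynomial.coeff (Finsupp.single 1 1) h with hc
  set d := MvPolynomial.coeff (Finsupp.single 0 2) h with hd
  set e := MvPolynomial.coeff (Finsupp.single 0 1 + Finsupp.single 1 1) h with he
  set f := MvPolynomial.coeff (Finsupp.single 1 2) h with hf
  have hh := conic_decomp h hdeg
  rw [← ha, ← hb, ← hc, ← hd, ← he, ← hf, monomial_form_eq a b c d e f] at hh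
  rw [hh] at hval hcoeff
  -- evaluate at (1,0)
  simp at hval
  -- compute the substituted polynomial's coefficients
  simp only [map_add, map_mul, map_pow, MvPolynomial.aeval_C, MvPolynomial.aeval_X,
    Matrix.cons_val_zero, Matrix.cons_val_one, Matrix.head_cons,
    Polynomial.algebraMap_eq] at hcoeff
  have hp : (Polynomial.C a
      + Polynomial.C b * (Polynomial.C t2 * Polynomial.X ^ 2 + Polynomial.C t3 * Polynomial.X ^ 3 +
            Polynomial.C t4 * Polynomial.X ^ 4 + Polynomial.C t5 * Polynomial.X ^ 5)
      + Polynomial.C c * Polynomial.X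
      + Polynomial.C d * (Polynomial.C t2 * Polynomial.X ^ 2 + Polynomial.C t3 * Polynomial.X ^ 3 +
            Polynomial.C t4 * Polynomial.X ^ 4 + Polynomial.C t5 * Polynomial.X ^ 5) ^ 2
      + Polynomial.C e * ((Polynomial.C t2 * Polynomial.X ^ 2 + Polynomial.C t3 * Polynomial.X ^ 3 +
            Polynomial.C t4 * Polynomial.X ^ 4 + Polynomial.C t5 * Polynomial.X ^ 5) * Polynomial.X)
      + Polynomial.C f * Polynomial.X ^ 2)
     = Polynomial.C a + Polynomial.C c * Polynomial.X
      + Polynomial.C (b * t2 + f) * Polynomial.X ^ 2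
      + Polynomial.C (b * t3 + e * t2) * Polynomial.X ^ 3
      + Polynomial.C (b * t4 + d * t2 ^ 2 + e * t3) * Polynomial.X ^ 4
      + Polynomial.C (b * t5 + 2 * d * t2 * t3 + e * t4) * Polynomial.X ^ 5
      + Polynomial.C (d * (t3 ^ 2 + 2 * t2 * t4) + e * t5) * Polynomial.X ^ 6
      + Polynomial.C (2 * d * (t2 * t5 + t3 * t4)) * Polynomial.X ^ 7
      + Polynomial.C (d * (t4 ^ 2 + 2 * t3 * t5)) * Polynomial.X ^ 8
      + Polynomial.C (2 * d * t4 * t5) * Polynomial.X ^ 9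
      + Polynomial.C (d * t5 ^ 2) * Polynomial.X ^ 10 := by
    simp only [Polynomial.C_add, Polynomial.C_mul, Polynomial.C_pow, map_ofNat]
    ring
  rw [hp] at hcoeff
  have E0 := hcoeff 0 (by norm_num)
  have E1 := hcoeff 1 (by norm_num)
  have E2 := hcoeff 2 (by norm_num)
  have E3 := hcoeff 3 (by norm_num)
  have E5 := hcoeff 5 (by norm_num)
  simp only [Polynomial.coeff_add, Polynomial.coeff_C_mul, Polynomial.coeff_X_pow,
    Polynomial.coeff_C, Polynomial.coeff_X] at E0 E1 E2 E3 E5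
  norm_num at E0 E1 E2 E3 E5
  -- b ≠ 0
  have hbne : b ≠ 0 := by
    intro hb0
    have hd0 : d = 0 := by linear_combination hval - E0 - hb0
    have he0 : e = 0 := by
      have : e * t2 = 0 := by linear_combination E3 - t3 * hb0
      exact (mul_eq_zero.mp this).resolve_right ht2
    have hf0 : f = 0 := by linear_combination E2 - t2 * hb0
    apply hne
    rw [hh, E0, E1, hb0, hd0, he0, hf0]
    simp
  have key : b * (t3 * t4 + 2 * t2 ^ 2 * t3 - t5 * t2) = 0 := by
    linear_combination (-t2) * E5 + t4 * E3 + 2 * t2 ^ 2 * t3 * hval - 2 * t2 ^ 2 * t3 * E0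
  exact (mul_eq_zero.mp key).resolve_left hbne
end
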